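/- For any bit strings x, y ∈ {0,1}ⁿ, the local quantum W₁ norm of the difference of the corresponding computational-basis projectors equals the Hamming distance: ‖|x⟩⟨x| − |y⟩⟨y|‖_{W₁loc} = |{ i ∈ [n] : x_i ≠ y_i }|. -/

import Mathlib

open Matrix BigOperators
open scoped ComplexOrder

noncomputable section

namespace QW1

variable {ι : Type*} [Fintype ι] [DecidableEq ι]

/-- The space of (not necessarily Hermitian) operators on a system of qubits labelled by `ι`:
matrices indexed by the computational basis `ι → Fin 2`. -/
abbrev QMat (ι : Type*) [Fintype ι] [DecidableEq ι] :=
  Matrix (ι → Fin 2) (ι → Fin 2) ℂ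

/-- The operator norm (largest singular value) of a matrix. -/
noncomputable def opNorm {d : Type*} [Fintype d] [DecidableEq d] (A : Matrix d d ℂ) : ℝ :=
  ⨆ i, Real.sqrt ((Matrix.isHermitian_conjTranspose_mul_self A).eigenvalues i)

/-- The trace norm (sum of singular values) of a matrix. -/
noncomputable def traceNorm {d : Type*} [Fintype d] [DecidableEq d] (A : Matrix d d ℂ) : ℝ :=
  ∑ i, Real.sqrt ((Matrix.isHermitian_conjTranspose_mul_self A).eigenvalues i)

/-- Combine an assignment of basis states on `Λ` and on its complement into one on all of `ι`. -/
def merge (Λ : Finset ι) (f : {x // x ∈ Λ} → Fin 2) (g : {x // x ∉ Λ} → Fin 2) (x : ι) :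
    Fin 2 :=
  if h : x ∈ Λ then f ⟨x, h⟩ else g ⟨x, h⟩

/-- The partial trace over the qubits outside `Λ`, `Tr_{Λᶜ}`, yielding an operator on the
qubits in `Λ`. -/
noncomputable def ptrace (Λ : Finset ι) (A : QMat ι) :
    Matrix ({x // x ∈ Λ} → Fin 2) ({x // x ∈ Λ} → Fin 2) ℂ :=
  fun f g => ∑ h : {x : ι // x ∉ Λ} → Fin 2, A (merge Λ f h) (merge Λ g h)

/-- The extension `M ⊗ I_{Λᶜ}` of an operator `M` on the qubits in `Λ` to all the qubits. -/
def embed (Λ : Finset ι)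
    (M : Matrix ({x // x ∈ Λ} → Fin 2) ({x // x ∈ Λ} → Fin 2) ℂ) : QMat ι :=
  fun f g =>
    (if ∀ x : ι, x ∉ Λ → f x = g x then
      M (fun x => f x.1) (fun x => g x.1) else 0)

/-- `H` acts on (at most) the qubits in `Λ`: it has the form `H_Λ ⊗ I_{Λᶜ}` with `H_Λ`
self-adjoint. -/
def ActsOn (Λ : Finset ι) (H : QMat ι) : Prop :=
  ∃ M, M.IsHermitian ∧ H = embed Λ M

/-- The local quantum norm with penalty coefficients `c`. -/
noncomputable def localNorm (c : ℕ → ℝ) (H : QMat ι) : ℝ :=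
  sInf { r : ℝ | ∃ F : Finset ι → QMat ι, (∀ Λ, ActsOn Λ (F Λ)) ∧ H = ∑ Λ, F Λ ∧
    r = 2 * ⨆ x : ι, ∑ Λ ∈ Finset.univ.filter (fun Λ : Finset ι => x ∈ Λ),
      c Λ.card * opNorm (F Λ) }

/-- The local quantum `W₁` norm: the dual of the local quantum norm. -/
noncomputable def W1loc (c : ℕ → ℝ) (Δ : QMat ι) : ℝ :=
  sSup { r : ℝ | ∃ H : QMat ι, H.IsHermitian ∧ localNorm c H ≤ 1 ∧ r = ((Δ * H).trace).re }

/-- The quantum `W₁` norm of De Palma et al. -/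
noncomputable def W1 (Δ : QMat ι) : ℝ :=
  sInf { r : ℝ | ∃ D : ι → QMat ι,
    (∀ x, (D x).IsHermitian ∧ (D x).trace = 0 ∧ ptrace ({x}ᶜ : Finset ι) (D x) = 0) ∧
    Δ = ∑ x, D x ∧ r = (1 / 2) * ∑ x, traceNorm (D x) }

/-- Tensor product of operators on two disjoint families of qubits. -/
def tensor {κ : Type*} [Fintype κ] [DecidableEq κ] (A : QMat ι) (B : QMat κ) :
    QMat (ι ⊕ κ) :=
  fun f g => A (f ∘ Sum.inl) (g ∘ Sum.inl) * B (f ∘ Sum.inr) (g ∘ Sum.inr)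

/-- Tensor product of single-qubit operators, one for each qubit. -/
def tensorAll (B : ι → Matrix (Fin 2) (Fin 2) ℂ) : QMat ι :=
  fun f g => ∏ j, B j (f j) (g j)

/-- The four Pauli matrices `I, X, Y, Z`. -/
noncomputable def pauli : Fin 4 → Matrix (Fin 2) (Fin 2) ℂ :=
  ![1, !![0, 1; 1, 0], !![0, -Complex.I; Complex.I, 0], !![1, 0; 0, -1]]

/-- The Pauli operator `σ_{a 1} ⊗ ⋯ ⊗ σ_{a n}`. -/
noncomputable def pauliOp (a : ι → Fin 4) : QMat ι :=
  tensorAll fun j => pauli (a j)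

/-- The weight (locality) of a Pauli operator: the number of non-identity factors. -/
def weight (a : ι → Fin 4) : ℕ :=
  (Finset.univ.filter fun j => a j ≠ 0).card

/-- A quantum state: a positive semidefinite matrix of unit trace. (`PosSemidef` is taken with
respect to the complex order.) -/
def IsState (ρ : QMat ι) : Prop :=
  ρ.PosSemidef ∧ ρ.trace = 1

end QW1

namespace QW1

variable {ι : Type*} [Fintype ι] [DecidableEq ι]

/-- The dependence `∂_x H` of the observable `H` on the qubit `x`. -/
noncomputable def dep (x : ι) (H : QMat ι) : ℝ :=
  2 * sInf { r : ℝ | ∃ K : QMat ι, ActsOn ({x}ᶜ : Finset ι) K ∧ r = opNorm (H - K) }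

/-- The quantum Lipschitz constant `‖H‖_L = max_x ∂_x H`. -/
noncomputable def lipNorm (H : QMat ι) : ℝ :=
  ⨆ x : ι, dep x H

/-- Single-qubit unitaries rotating the eigenbases of the Paulis `Z`, `X`, `Y`
to the computational basis. -/
noncomputable def ubasis : Fin 3 → Matrix (Fin 2) (Fin 2) ℂ :=
  ![1,
    (Real.sqrt 2 : ℂ)⁻¹ • !![1, 1; 1, -1],
    (Real.sqrt 2 : ℂ)⁻¹ • !![1, -Complex.I; 1, Complex.I]]

/-- The single-qubit classical shadow `3 U† |b⟩⟨b| U − I`. -/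
noncomputable def shadow1 (w : Fin 3) (b : Fin 2) : Matrix (Fin 2) (Fin 2) ℂ :=
  (3 : ℂ) • ((ubasis w)ᴴ * Matrix.single b b 1 * ubasis w) - 1

/-- The classical shadow `⊗_j (3 U_j† |b_j⟩⟨b_j| U_j − I)` of the Pauli measurement
primitive associated with the sampled basis choices and outcomes `s`. -/
noncomputable def shadowOf (s : ι → Fin 3 × Fin 2) : QMat ι :=
  tensorAll fun j => shadow1 (s j).1 (s j).2

/-- The probability of the sample `s` (a uniformly random Pauli basis measured on each qubit,
with outcomes distributed with the Born probability `⟨b|UρU†|b⟩`) when measuring one copy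
of `ρ` in the Pauli measurement primitive. -/
noncomputable def shadowPMF (ρ : QMat ι) (s : ι → Fin 3 × Fin 2) : ℝ :=
  ((3 : ℝ) ^ Fintype.card ι)⁻¹ *
    (((tensorAll fun j => ubasis (s j).1) * ρ * (tensorAll fun j => ubasis (s j).1)ᴴ)
      (fun j => (s j).2) (fun j => (s j).2)).re

open Classical in
/-- The probability that `N` independent classical shadows of `ρ` (from the Pauli
measurement primitive) satisfy the event `E`. -/
noncomputable def shadowProb (ρ : QMat ι) (N : ℕ)
    (E : (Fin N → ι → Fin 3 × Fin 2) → Prop) : ℝ :=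
  ∑ ω : Fin N → ι → Fin 3 × Fin 2, if E ω then ∏ i, shadowPMF ρ (ω i) else 0

/-- Extension of a single-qubit operator `K` on the qubit `i`, acting as the identity on the
remaining qubits. -/
noncomputable def oneSite (i : ι) (K : Matrix (Fin 2) (Fin 2) ℂ) : QMat ι :=
  tensorAll fun j => if j = i then K else 1

/-- Logarithm of a Hermitian matrix via its spectral decomposition (junk value otherwise). -/
noncomputable def mlog {d : Type*} [Fintype d] [DecidableEq d] (A : Matrix d d ℂ) :
    Matrix d d ℂ :=
  if hA : A.IsHermitian then
    (hA.eigenvectorUnitary : Matrix d d ℂ) *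
      Matrix.diagonal (fun i => (Real.log (hA.eigenvalues i) : ℂ)) *
      star (hA.eigenvectorUnitary : Matrix d d ℂ)
  else 0

/-- The quantum relative entropy `S(ρ‖σ) = Tr[ρ(ln ρ − ln σ)]`. -/
noncomputable def relEnt (ρ σ : QMat ι) : ℝ :=
  ((ρ * (mlog ρ - mlog σ)).trace).re

/-- The Gibbs state `e^{−H} / Tr e^{−H}`. -/
noncomputable def gibbs (H : QMat ι) : QMat ι :=
  ((NormedSpace.exp (-H)).trace)⁻¹ • NormedSpace.exp (-H)

end QW1

open QW1 Matrix Complex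

/-!
Under a flip of the qubit `a`, the diagonal entry `⟨z|H|z⟩` of `H = ∑ Λ, F Λ` changes only
through the terms with `a ∈ Λ`, each by at most `2 ‖F Λ‖ ≤ 2 c_{|Λ|} ‖F Λ‖`. Hence
`z ↦ ⟨z|H|z⟩` is `‖H‖_loc`-Lipschitz for the Hamming distance, and
`Tr[(|x⟩⟨x| − |y⟩⟨y|) H] = ⟨x|H|x⟩ − ⟨y|H|y⟩ ≤ d(x, y)` whenever `‖H‖_loc ≤ 1`.
Equality holds for `H₀ = ½ ∑ᵢ (|xᵢ⟩⟨xᵢ| − |yᵢ⟩⟨yᵢ|) ⊗ I`, a sum of one-site terms of norm `½`.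
-/

namespace QW1

section

variable {d : Type*} [Fintype d] [DecidableEq d]

lemma opNorm_nonneg (A : Matrix d d ℂ) : 0 ≤ opNorm A :=
  Real.iSup_nonneg fun _ => Real.sqrt_nonneg _

lemma eigenvalues_conjTranspose_mul_self_le_opNorm_sq (A : Matrix d d ℂ) (i : d) :
    (isHermitian_conjTranspose_mul_self A).eigenvalues i ≤ opNorm A ^ 2 := by
  have hsqrt : Real.sqrt ((isHermitian_conjTranspose_mul_self A).eigenvalues i) ≤ opNorm A :=
    le_ciSup (f := fun j => Real.sqrt ((isHermitian_conjTranspose_mul_self A).eigenvalues j))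
      (Set.finite_range _).bddAbove i
  rw [← Real.sq_sqrt ((posSemidef_conjTranspose_mul_self A).eigenvalues_nonneg i)]
  exact pow_le_pow_left₀ (Real.sqrt_nonneg _) hsqrt 2

/-- `t • 1 - B = U (t - D) Uᴴ` is positive semidefinite, so its diagonal entries are nonnegative. -/
lemma re_apply_self_le_of_eigenvalues_le {B : Matrix d d ℂ} (hB : B.IsHermitian) {t : ℝ}
    (h : ∀ i, hB.eigenvalues i ≤ t) (z : d) : (B z z).re ≤ t := by
  set U : Matrix d d ℂ := (hB.eigenvectorUnitary : Matrix d d ℂ)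
  set D : Matrix d d ℂ := diagonal (RCLike.ofReal ∘ hB.eigenvalues)
  have hU : U * Uᴴ = 1 := mem_unitaryGroup_iff.mp hB.eigenvectorUnitary.2
  have hB' : B = U * D * Uᴴ := hB.spectral_theorem
  have hpsd : ((t : ℂ) • 1 - B).PosSemidef := by
    have hD : (diagonal fun i => ((t - hB.eigenvalues i : ℝ) : ℂ)).PosSemidef :=
      posSemidef_diagonal_iff.mpr fun i => by simpa using h i
    convert hD.mul_mul_conjTranspose_same U using 1
    calc (t : ℂ) • 1 - B = U * ((t : ℂ) • 1) * Uᴴ - U * D * Uᴴ := by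
          rw [Matrix.mul_smul, mul_one, Matrix.smul_mul, hU, ← hB']
      _ = U * ((t : ℂ) • 1 - D) * Uᴴ := by rw [Matrix.mul_sub, Matrix.sub_mul]
      _ = _ := by
        congr 2
        ext i j
        by_cases hij : i = j <;> simp [D, hij]
  simpa using (Complex.le_def.mp (hpsd.diag_nonneg (i := z))).1

lemma norm_apply_self_le_opNorm (A : Matrix d d ℂ) (z : d) : ‖A z z‖ ≤ opNorm A := by
  have hcol : ‖A z z‖ ^ 2 ≤ ((Aᴴ * A) z z).re := by
    have : ((Aᴴ * A) z z).re = ∑ k, Complex.normSq (A k z) := by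
      simp [mul_apply, Complex.re_sum, Complex.mul_re, Complex.normSq_apply]
    rw [this, ← Complex.normSq_eq_norm_sq]
    exact Finset.single_le_sum (fun k _ => Complex.normSq_nonneg (A k z)) (Finset.mem_univ z)
  have heig := re_apply_self_le_of_eigenvalues_le (isHermitian_conjTranspose_mul_self A)
    (eigenvalues_conjTranspose_mul_self_le_opNorm_sq A) z
  exact le_of_pow_le_pow_left₀ two_ne_zero (opNorm_nonneg A) (hcol.trans heig)

lemma opNorm_diagonal_le {v : d → ℂ} {t : ℝ} (ht : 0 ≤ t) (h : ∀ i, ‖v i‖ ≤ t) :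
    opNorm (diagonal v) ≤ t := by
  refine Real.iSup_le (fun i => ?_) ht
  have hmem := (spectrum.algebraMap_mem_iff ℂ).mpr
    ((isHermitian_conjTranspose_mul_self (diagonal v)).eigenvalues_mem_spectrum_real i)
  generalize (isHermitian_conjTranspose_mul_self (diagonal v)).eigenvalues i = e at hmem ⊢
  rw [diagonal_conjTranspose, diagonal_mul_diagonal, spectrum_diagonal] at hmem
  obtain ⟨k, hk⟩ := hmem
  have he : e = ‖v k‖ ^ 2 := by
    rw [← Complex.ofReal_inj, Complex.ofReal_pow, ← Complex.mul_conj', mul_comm]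
    exact hk.symm
  rw [he, Real.sqrt_sq (norm_nonneg _)]
  exact h k

lemma opNorm_zero : opNorm (0 : Matrix d d ℂ) = 0 :=
  le_antisymm (by simpa using opNorm_diagonal_le (v := 0) le_rfl (by simp)) (opNorm_nonneg 0)

lemma trace_sub_single_mul (x y : d) (H : Matrix d d ℂ) :
    ((single x x 1 - single y y 1) * H).trace = H x x - H y y := by
  simp [Matrix.sub_mul, trace_single_mul]

end

lemma hammingDist_update_add_one {κ β : Type*} [Fintype κ] [DecidableEq κ] [DecidableEq β]
    {x y : κ → β} {i : κ} (hi : x i ≠ y i) :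
    hammingDist (Function.update x i (y i)) y + 1 = hammingDist x y := by
  have hfilter : Finset.univ.filter (fun j => Function.update x i (y i) j ≠ y j) =
      (Finset.univ.filter fun j => x j ≠ y j).erase i := by
    ext j
    by_cases hj : j = i
    · subst hj
      simp
    · simp [hj]
  unfold hammingDist
  rw [hfilter, Finset.card_erase_add_one (by simpa using hi)]

lemma sub_le_hammingDist_mul {κ β : Type*} [Fintype κ] [DecidableEq κ] [DecidableEq β]
    (f : (κ → β) → ℝ) (r : ℝ) (hf : ∀ z a b, f z - f (Function.update z a b) ≤ r)
    (x y : κ → β) : f x - f y ≤ hammingDist x y * r := by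
  induction hxy : hammingDist x y generalizing x with
  | zero => simp [hammingDist_eq_zero.mp hxy]
  | succ k ih =>
    obtain ⟨i, hi⟩ := Function.ne_iff.mp (hammingDist_ne_zero.mp (by omega : hammingDist x y ≠ 0))
    have hk := ih (Function.update x i (y i)) (by have := hammingDist_update_add_one hi; omega)
    have hflip := hf x i (y i)
    push_cast
    linarith

variable {ι : Type*} [Fintype ι] [DecidableEq ι]

section Embed

lemma embed_zero (Λ : Finset ι) : embed Λ 0 = 0 := by
  ext f g
  simp [embed]

lemma embed_apply_self (Λ : Finset ι) (M) (z : ι → Fin 2) :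
    embed Λ M z z = M (fun x => z x) (fun x => z x) := by
  simp [embed]

lemma embed_diagonal (Λ : Finset ι) (v : ({x // x ∈ Λ} → Fin 2) → ℂ) :
    embed Λ (diagonal v) = diagonal fun f : ι → Fin 2 => v fun x => f x := by
  ext f g
  by_cases hfg : f = g
  · subst hfg
    simp [embed]
  · rw [diagonal_apply_ne _ hfg, embed, diagonal_apply]
    split_ifs with hout hin
    · refine absurd (funext fun w => ?_) hfg
      by_cases hw : w ∈ Λ
      · exact congrFun hin ⟨w, hw⟩
      · exact hout w hw
    all_goals rfl

lemma isHermitian_embed {Λ : Finset ι} {M} (hM : M.IsHermitian) : (embed Λ M).IsHermitian := by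
  ext f g
  simp only [conjTranspose_apply, embed, eq_comm (a := g _)]
  split_ifs
  · exact congrFun (congrFun hM _) _
  · simp

lemma actsOn_zero (Λ : Finset ι) : ActsOn Λ (0 : QMat ι) :=
  ⟨0, isHermitian_zero, (embed_zero Λ).symm⟩

lemma actsOn_univ {H : QMat ι} (hH : H.IsHermitian) : ActsOn Finset.univ H := by
  refine ⟨fun f g => H (fun i => f ⟨i, Finset.mem_univ i⟩) (fun i => g ⟨i, Finset.mem_univ i⟩),
    ?_, ?_⟩
  · ext f g
    exact congrFun (congrFun hH _) _
  · ext f g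
    simp [embed]

lemma ActsOn.isHermitian {Λ : Finset ι} {A : QMat ι} (hA : ActsOn Λ A) : A.IsHermitian := by
  obtain ⟨M, hM, rfl⟩ := hA
  exact isHermitian_embed hM

lemma isHermitian_sum_of_actsOn {F : Finset ι → QMat ι} (hF : ∀ Λ, ActsOn Λ (F Λ)) :
    (∑ Λ, F Λ).IsHermitian :=
  (isSelfAdjoint_sum _ fun Λ _ => (hF Λ).isHermitian.isSelfAdjoint).isHermitian

lemma ActsOn.apply_self_eq {Λ : Finset ι} {A : QMat ι} (hA : ActsOn Λ A) {z z' : ι → Fin 2}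
    (h : ∀ w ∈ Λ, z w = z' w) : A z z = A z' z' := by
  obtain ⟨M, -, rfl⟩ := hA
  simp only [embed_apply_self]
  congr 1 <;> exact funext fun w => h w w.2

end Embed

section Decomposition

def decompNorm (c : ℕ → ℝ) (F : Finset ι → QMat ι) : ℝ :=
  2 * ⨆ x : ι, ∑ Λ ∈ Finset.univ.filter (fun Λ : Finset ι => x ∈ Λ), c Λ.card * opNorm (F Λ)

variable {c : ℕ → ℝ} {F : Finset ι → QMat ι}

lemma decompNorm_nonneg (hc : ∀ Λ : Finset ι, Λ.Nonempty → 0 ≤ c Λ.card) :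
    0 ≤ decompNorm c F :=
  mul_nonneg zero_le_two <| Real.iSup_nonneg fun x => Finset.sum_nonneg fun Λ hΛ =>
    mul_nonneg (hc Λ ⟨x, (Finset.mem_filter.mp hΛ).2⟩) (opNorm_nonneg _)

lemma exists_actsOn_decomposition {H : QMat ι} (hH : H.IsHermitian) :
    ∃ F : Finset ι → QMat ι, (∀ Λ, ActsOn Λ (F Λ)) ∧ H = ∑ Λ, F Λ := by
  refine ⟨Pi.single Finset.univ H, fun Λ => ?_, by simp⟩
  by_cases hΛ : Λ = Finset.univ
  · subst hΛ
    simpa using actsOn_univ hH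
  · simpa [hΛ] using actsOn_zero Λ

lemma localNorm_le_decompNorm (hc : ∀ Λ : Finset ι, Λ.Nonempty → 0 ≤ c Λ.card)
    (hF : ∀ Λ, ActsOn Λ (F Λ)) : localNorm c (∑ Λ, F Λ) ≤ decompNorm c F := by
  refine csInf_le ⟨0, ?_⟩ ⟨F, hF, rfl, rfl⟩
  rintro r ⟨F', -, -, rfl⟩
  exact decompNorm_nonneg hc

lemma decompNorm_of_card_ne_one (hF : ∀ Λ : Finset ι, Λ.card ≠ 1 → F Λ = 0) :
    decompNorm c F = 2 * ⨆ x : ι, c 1 * opNorm (F {x}) := by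
  unfold decompNorm
  congr 1
  refine iSup_congr fun x => ?_
  rw [Finset.sum_eq_single_of_mem {x} (by simp)]
  · simp
  · intro Λ hΛ hne
    have hcard : Λ.card ≠ 1 := fun h => by
      obtain ⟨a, rfl⟩ := Finset.card_eq_one.mp h
      simp_all
    simp [hF Λ hcard, opNorm_zero]

lemma re_apply_self_sub_update_le_decompNorm (hc : ∀ Λ : Finset ι, Λ.Nonempty → 1 ≤ c Λ.card)
    (hF : ∀ Λ, ActsOn Λ (F Λ)) (z : ι → Fin 2) (a : ι) (b : Fin 2) :
    ((∑ Λ, F Λ) z z).re - ((∑ Λ, F Λ) (Function.update z a b) (Function.update z a b)).re ≤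
      decompNorm c F := by
  set z' := Function.update z a b
  simp only [Matrix.sum_apply, Complex.re_sum, ← Finset.sum_sub_distrib]
  rw [← Finset.sum_filter_of_ne (p := fun Λ : Finset ι => a ∈ Λ)]
  · calc _ ≤ ∑ Λ ∈ Finset.univ.filter (fun Λ : Finset ι => a ∈ Λ),
            2 * (c Λ.card * opNorm (F Λ)) := by
          refine Finset.sum_le_sum fun Λ hΛ => ?_
          have hcΛ := hc Λ ⟨a, (Finset.mem_filter.mp hΛ).2⟩
          have h1 := (Complex.re_le_norm (F Λ z z)).trans (norm_apply_self_le_opNorm _ z)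
          have h2 := (neg_le_abs _).trans ((Complex.abs_re_le_norm (F Λ z' z')).trans
            (norm_apply_self_le_opNorm _ z'))
          nlinarith [opNorm_nonneg (F Λ)]
      _ ≤ decompNorm c F := by
          rw [← Finset.mul_sum]
          exact mul_le_mul_of_nonneg_left (le_ciSup (f := fun x : ι =>
            ∑ Λ ∈ Finset.univ.filter (fun Λ : Finset ι => x ∈ Λ), c Λ.card * opNorm (F Λ))
            (Set.finite_range _).bddAbove a) zero_le_two
  · intro Λ _ hne
    by_contra haΛ
    refine hne (sub_eq_zero.mpr (congrArg Complex.re ((hF Λ).apply_self_eq fun w hw => ?_)))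
    exact (Function.update_of_ne (ne_of_mem_of_not_mem hw haΛ) _ _).symm

end Decomposition

lemma re_apply_self_sub_le_hammingDist_mul_localNorm {c : ℕ → ℝ}
    (hc : ∀ Λ : Finset ι, Λ.Nonempty → 1 ≤ c Λ.card) {H : QMat ι} (hH : H.IsHermitian)
    (x y : ι → Fin 2) : (H x x).re - (H y y).re ≤ hammingDist x y * localNorm c H := by
  rcases (hammingDist x y).eq_zero_or_pos with hxy | hxy
  · simp [hammingDist_eq_zero.mp hxy]
  rw [← div_le_iff₀' (by exact_mod_cast hxy)]
  obtain ⟨F₀, hF₀, hH₀⟩ := exists_actsOn_decomposition hH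
  refine le_csInf ⟨_, F₀, hF₀, hH₀, rfl⟩ ?_
  rintro r ⟨F, hF, rfl, rfl⟩
  rw [div_le_iff₀' (by exact_mod_cast hxy)]
  exact sub_le_hammingDist_mul (fun z => ((∑ Λ, F Λ) z z).re) _
    (re_apply_self_sub_update_le_decompNorm hc hF) x y

section Witness

/-- The one-site decomposition of `H₀ = ½ ∑ᵢ (|xᵢ⟩⟨xᵢ| − |yᵢ⟩⟨yᵢ|) ⊗ I`, which attains the
Hamming distance. -/
def hammingWitness (x y : ι → Fin 2) (Λ : Finset ι) : QMat ι :=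
  if Λ.card = 1 then
    embed Λ (diagonal fun f =>
      ((if ∀ j, f j = x j then 1 else 0) - (if ∀ j, f j = y j then 1 else 0)) / 2)
  else 0

variable (x y : ι → Fin 2)

lemma actsOn_hammingWitness (Λ : Finset ι) : ActsOn Λ (hammingWitness x y Λ) := by
  unfold hammingWitness
  split_ifs
  · refine ⟨_, isHermitian_diagonal_iff.mpr fun f => ?_, rfl⟩
    split_ifs <;> simp [IsSelfAdjoint]
  · exact actsOn_zero Λ

lemma opNorm_hammingWitness_le (Λ : Finset ι) : opNorm (hammingWitness x y Λ) ≤ 1 / 2 := by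
  unfold hammingWitness
  split_ifs
  · rw [embed_diagonal]
    refine opNorm_diagonal_le (by norm_num) fun f => ?_
    split_ifs <;> norm_num
  · rw [opNorm_zero]
    norm_num

lemma decompNorm_hammingWitness_le {c : ℕ → ℝ} (hc1 : c 1 = 1) :
    decompNorm c (hammingWitness x y) ≤ 1 := by
  rw [decompNorm_of_card_ne_one fun Λ hΛ => by simp [hammingWitness, hΛ], hc1]
  have := Real.iSup_le (fun i => (one_mul (opNorm _)).trans_le
    (opNorm_hammingWitness_le x y {i})) (by norm_num : (0 : ℝ) ≤ 1 / 2)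
  linarith

lemma re_sum_hammingWitness_sub :
    ((∑ Λ, hammingWitness x y Λ) x x).re - ((∑ Λ, hammingWitness x y Λ) y y).re =
      hammingDist x y := by
  simp only [Matrix.sum_apply, Complex.re_sum, ← Finset.sum_sub_distrib]
  have hterm : ∀ Λ : Finset ι, (hammingWitness x y Λ x x).re - (hammingWitness x y Λ y y).re =
      if Λ.card = 1 then (if ∃ j ∈ Λ, x j ≠ y j then 1 else 0) else 0 := by
    intro Λ
    by_cases hΛ : Λ.card = 1
    · obtain ⟨i, rfl⟩ := Finset.card_eq_one.mp hΛ
      by_cases hi : x i = y i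
      · simp [hammingWitness, embed_apply_self, hi]
      · simp [hammingWitness, embed_apply_self, hi, Ne.symm hi]
        norm_num
    · simp [hammingWitness, hΛ]
  simp only [hterm]
  rw [← Finset.sum_filter, Finset.univ_filter_card_eq, Finset.powersetCard_one, Finset.sum_map]
  simp only [Function.Embedding.coeFn_mk, Finset.mem_singleton, exists_eq_left]
  rw [Finset.sum_boole]
  rfl

end Witness

end QW1

/-- The local quantum `W₁` norm recovers the Hamming distance on the states
of the computational basis: `‖|x⟩⟨x| − |y⟩⟨y|‖_{W₁loc} = |{i : xᵢ ≠ yᵢ}|`. -/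
theorem stmt7 {n : ℕ} (c : ℕ → ℝ) (hc1 : c 1 = 1)
    (hcmono : ∀ k l, 1 ≤ k → k ≤ l → l ≤ n → c k ≤ c l)
    (x y : Fin n → Fin 2) :
    W1loc c (Matrix.single x x 1 - Matrix.single y y 1) =
      ((Finset.univ.filter fun i => x i ≠ y i).card : ℝ) := by
  have hc : ∀ Λ : Finset (Fin n), Λ.Nonempty → 1 ≤ c Λ.card := fun Λ hΛ =>
    hc1 ▸ hcmono 1 Λ.card le_rfl hΛ.card_pos (by simpa using Λ.card_le_univ)
  have htrace : ∀ H : QMat (Fin n),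
      ((single x x 1 - single y y 1) * H).trace.re = (H x x).re - (H y y).re := fun H => by
    rw [trace_sub_single_mul, Complex.sub_re]
  change _ = (hammingDist x y : ℝ)
  refine IsGreatest.csSup_eq ⟨⟨∑ Λ, hammingWitness x y Λ,
    isHermitian_sum_of_actsOn (actsOn_hammingWitness x y), ?_, ?_⟩, ?_⟩
  · exact (localNorm_le_decompNorm (fun Λ hΛ => zero_le_one.trans (hc Λ hΛ))
      (actsOn_hammingWitness x y)).trans (decompNorm_hammingWitness_le x y hc1)
  · rw [htrace, re_sum_hammingWitness_sub]
  · rintro r ⟨H, hH, hloc, rfl⟩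
    rw [htrace]
    calc (H x x).re - (H y y).re ≤ hammingDist x y * localNorm c H :=
          re_apply_self_sub_le_hammingDist_mul_localNorm hc hH x y
      _ ≤ hammingDist x y := mul_le_of_le_one_right (Nat.cast_nonneg _) hloc
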